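/- Let N : ℝ² → ℝ³ be twice continuously differentiable, let A, S, B : ℝ² → ℝ be continuously differentiable and F : ℝ² → ℝ be such that (A·N_x)_x + (S·N_y)_x + (B·N_y)_y + (S·N_x)_y = F·N at every point of ℝ². Then there exists a map R : ℝ² → ℝ³ with R_x = −( S·(N×N_x) + B·(N×N_y) ) and R_y = A·(N×N_x) + S·(N×N_y) at every point; moreover any such R satisfies R_x × R_y = (A·B − S²)·det(N, N_x, N_y)·N and ⟨N, R_x⟩ = 0 = ⟨N, R_y⟩ everywhere, so that R is the position vector of a surface having N as a co-normal field, which is regular wherever (A·B − S²)·det(N, N_x, N_y) ≠ 0. -/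

import Mathlib

/-! Write `U = A N_x + S N_y` and `V = S N_x + B N_y`, so that the prescribed derivatives are
`R_x = -(N × V)` and `R_y = N × U`. The one-form `-(N × V) dx + (N × U) dy` is closed:
`(N × U)_x + (N × V)_y = N_x × U + N_y × V + N × (U_x + V_y)`, where `N_x × U + N_y × V = 0` by
antisymmetry of `×` and `U_x + V_y = F N` is the equation. By the Poincaré lemma on the convex
plane it is exact. The remaining claims are pointwise vector algebra, the key identity being
`(N × X) × (N × Y) = det(N, X, Y) N`. -/

open Matrix

/-- Partial derivative with respect to the first coordinate. -/
noncomputable def pdx (f : ℝ × ℝ → (Fin 3 → ℝ)) (p : ℝ × ℝ) : Fin 3 → ℝ :=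
  fderiv ℝ f p (1, 0)

/-- Partial derivative with respect to the second coordinate. -/
noncomputable def pdy (f : ℝ × ℝ → (Fin 3 → ℝ)) (p : ℝ × ℝ) : Fin 3 → ℝ :=
  fderiv ℝ f p (0, 1)

/-- Determinant of the 3×3 matrix with rows `u`, `v`, `w`. -/
noncomputable def det3 (u v w : Fin 3 → ℝ) : ℝ :=
  (Matrix.of ![u, v, w]).det

section CrossProduct

variable {R : Type*} [CommRing R]

theorem cross_cross_cross_self_left (u v w : Fin 3 → R) :
    (u ⨯₃ v) ⨯₃ (u ⨯₃ w) = Matrix.det ![u, v, w] • u := by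
  rw [cross_cross_eq_smul_sub_smul, dot_self_cross, zero_smul, zero_sub,
    triple_product_permutation, ← cross_anticomm, dotProduct_neg, neg_smul, neg_neg,
    triple_product_eq_det]

theorem neg_add_smul_cross_add_smul (x y : Fin 3 → R) (a s b : R) :
    (-(s • x + b • y)) ⨯₃ (a • x + s • y) = (a * b - s ^ 2) • (x ⨯₃ y) := by
  simp only [map_neg, map_add, map_smul, LinearMap.neg_apply, LinearMap.add_apply,
    LinearMap.smul_apply, cross_self, ← cross_anticomm y x]
  module

theorem cross_add_smul_add_cross_add_smul (x y : Fin 3 → R) (a s b : R) :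
    x ⨯₃ (a • x + s • y) + y ⨯₃ (s • x + b • y) = 0 := by
  simp only [map_add, map_smul, cross_self, ← cross_anticomm x y]
  module

end CrossProduct

section Calculus

variable {E : Type*} [NormedAddCommGroup E] [NormedSpace ℝ E]
  {f g : E → Fin 3 → ℝ} {x : E}

theorem DifferentiableAt.cross (hf : DifferentiableAt ℝ f x) (hg : DifferentiableAt ℝ g x) :
    DifferentiableAt ℝ (fun y => f y ⨯₃ g y) x :=
  ((crossProduct (R := ℝ)).toContinuousBilinearMap.hasFDerivAt_of_bilinear hf.hasFDerivAt
    hg.hasFDerivAt).differentiableAt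

theorem Differentiable.cross (hf : Differentiable ℝ f) (hg : Differentiable ℝ g) :
    Differentiable ℝ fun y => f y ⨯₃ g y := fun x => (hf x).cross (hg x)

theorem fderiv_cross_apply (hf : DifferentiableAt ℝ f x) (hg : DifferentiableAt ℝ g x) (v : E) :
    fderiv ℝ (fun y => f y ⨯₃ g y) x v = fderiv ℝ f x v ⨯₃ g x + f x ⨯₃ fderiv ℝ g x v := by
  have h := (crossProduct (R := ℝ)).toContinuousBilinearMap.fderiv_of_bilinear hf hg
  exact (DFunLike.congr_fun h v).trans (add_comm _ _)

end Calculus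

theorem exists_forall_fderiv_apply_eq_of_curl_eq_zero {E : Type*} [NormedAddCommGroup E]
    [NormedSpace ℝ E] [CompleteSpace E] {P Q : ℝ × ℝ → E} (hP : Differentiable ℝ P)
    (hQ : Differentiable ℝ Q) (hcurl : ∀ p, fderiv ℝ Q p (1, 0) = fderiv ℝ P p (0, 1)) :
    ∃ R : ℝ × ℝ → E, ∀ p, fderiv ℝ R p (1, 0) = P p ∧ fderiv ℝ R p (0, 1) = Q p := by
  let dx := ContinuousLinearMap.smulRightL ℝ (ℝ × ℝ) E (.fst ℝ ℝ ℝ)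
  let dy := ContinuousLinearMap.smulRightL ℝ (ℝ × ℝ) E (.snd ℝ ℝ ℝ)
  let ω : ℝ × ℝ → ℝ × ℝ →L[ℝ] E := fun p => dx (P p) + dy (Q p)
  have hω : ∀ p, HasFDerivAt ω (dx.comp (fderiv ℝ P p) + dy.comp (fderiv ℝ Q p)) p := fun p =>
    (dx.hasFDerivAt.comp p (hP p).hasFDerivAt).add (dy.hasFDerivAt.comp p (hQ p).hasFDerivAt)
  have hexpand : ∀ (L : ℝ × ℝ →L[ℝ] E) (u : ℝ × ℝ), L u = u.1 • L (1, 0) + u.2 • L (0, 1) := by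
    intro L u
    rw [← map_smul, ← map_smul, ← map_add]
    congr 1
    ext <;> simp
  have hsymm : ∀ p u v, fderiv ℝ ω p u v = fderiv ℝ ω p v u := by
    intro p u v
    have hdω : ∀ u v, fderiv ℝ ω p u v = v.1 • fderiv ℝ P p u + v.2 • fderiv ℝ Q p u := by
      intro u v
      rw [(hω p).fderiv]
      rfl
    rw [hdω, hdω, hexpand (fderiv ℝ P p) u, hexpand (fderiv ℝ Q p) u, hexpand (fderiv ℝ P p) v,
      hexpand (fderiv ℝ Q p) v, hcurl p]
    module
  obtain ⟨R, hR⟩ := convex_univ.exists_forall_hasFDerivAt_of_fderiv_symmetric isOpen_univ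
    (fun p _ => (hω p).differentiableAt.differentiableWithinAt) fun p _ => hsymm p
  refine ⟨R, fun p => ⟨?_, ?_⟩⟩ <;> simp [(hR p trivial).fderiv, ω, dx, dy]

section Lelieuvre

variable {N U V : ℝ × ℝ → Fin 3 → ℝ} {A S B F : ℝ × ℝ → ℝ} {p : ℝ × ℝ}

theorem pdx_add (hU : DifferentiableAt ℝ U p) (hV : DifferentiableAt ℝ V p) :
    pdx (fun q => U q + V q) p = pdx U p + pdx V p := by
  rw [pdx, fderiv_fun_add hU hV]
  rfl

theorem pdy_add (hU : DifferentiableAt ℝ U p) (hV : DifferentiableAt ℝ V p) :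
    pdy (fun q => U q + V q) p = pdy U p + pdy V p := by
  rw [pdy, fderiv_fun_add hU hV]
  rfl

theorem pdx_cross_add_pdy_cross (hN : DifferentiableAt ℝ N p) (hU : DifferentiableAt ℝ U p)
    (hV : DifferentiableAt ℝ V p) :
    pdx (fun q => N q ⨯₃ U q) p + pdy (fun q => N q ⨯₃ V q) p
      = pdx N p ⨯₃ U p + pdy N p ⨯₃ V p + N p ⨯₃ (pdx U p + pdy V p) := by
  simp only [pdx, pdy, fderiv_cross_apply hN hU, fderiv_cross_apply hN hV, map_add]
  abel

theorem pdx_cross_add_pdy_cross_eq_zero (hN : DifferentiableAt ℝ N p)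
    (hNx : DifferentiableAt ℝ (pdx N) p) (hNy : DifferentiableAt ℝ (pdy N) p)
    (hA : DifferentiableAt ℝ A p) (hS : DifferentiableAt ℝ S p) (hB : DifferentiableAt ℝ B p)
    (heq : pdx (fun q => A q • pdx N q) p + pdx (fun q => S q • pdy N q) p
        + pdy (fun q => B q • pdy N q) p + pdy (fun q => S q • pdx N q) p = F p • N p) :
    pdx (fun q => N q ⨯₃ (A q • pdx N q + S q • pdy N q)) p
      + pdy (fun q => N q ⨯₃ (S q • pdx N q + B q • pdy N q)) p = 0 := by
  have hdiv : pdx (fun q => A q • pdx N q + S q • pdy N q) p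
      + pdy (fun q => S q • pdx N q + B q • pdy N q) p = F p • N p := by
    rw [pdx_add (hA.fun_smul hNx) (hS.fun_smul hNy), pdy_add (hS.fun_smul hNx) (hB.fun_smul hNy),
      ← heq]
    abel
  rw [pdx_cross_add_pdy_cross hN ((hA.fun_smul hNx).fun_add (hS.fun_smul hNy))
    ((hS.fun_smul hNx).fun_add (hB.fun_smul hNy)), hdiv, cross_add_smul_add_cross_add_smul,
    map_smul, cross_self, smul_zero, zero_add]

theorem exists_pdx_pdy_eq_lelieuvre (hN : Differentiable ℝ N) (hNx : Differentiable ℝ (pdx N))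
    (hNy : Differentiable ℝ (pdy N)) (hA : Differentiable ℝ A) (hS : Differentiable ℝ S)
    (hB : Differentiable ℝ B)
    (heq : ∀ p, pdx (fun q => A q • pdx N q) p + pdx (fun q => S q • pdy N q) p
        + pdy (fun q => B q • pdy N q) p + pdy (fun q => S q • pdx N q) p = F p • N p) :
    ∃ R : ℝ × ℝ → Fin 3 → ℝ, ∀ p,
      pdx R p = -(S p • (N p ⨯₃ pdx N p) + B p • (N p ⨯₃ pdy N p)) ∧
      pdy R p = A p • (N p ⨯₃ pdx N p) + S p • (N p ⨯₃ pdy N p) := by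
  obtain ⟨R, hR⟩ := exists_forall_fderiv_apply_eq_of_curl_eq_zero
    (P := fun q => -(N q ⨯₃ (S q • pdx N q + B q • pdy N q)))
    (Q := fun q => N q ⨯₃ (A q • pdx N q + S q • pdy N q))
    (hN.cross ((hS.smul hNx).add (hB.smul hNy))).neg (hN.cross ((hA.smul hNx).add (hS.smul hNy)))
    fun p => by
      rw [fderiv_fun_neg, _root_.neg_apply, ← add_eq_zero_iff_eq_neg]
      exact pdx_cross_add_pdy_cross_eq_zero (hN p) (hNx p) (hNy p) (hA p) (hS p) (hB p) (heq p)
  exact ⟨R, fun p => by simpa only [pdx, pdy, map_add, map_smul] using hR p⟩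

theorem lelieuvre_cross_lelieuvre (n x y : Fin 3 → ℝ) (a s b : ℝ) :
    (-(s • (n ⨯₃ x) + b • (n ⨯₃ y))) ⨯₃ (a • (n ⨯₃ x) + s • (n ⨯₃ y))
      = ((a * b - s ^ 2) * det3 n x y) • n := by
  rw [neg_add_smul_cross_add_smul, cross_cross_cross_self_left, smul_smul]
  rfl

end Lelieuvre

/-- Converse Lelieuvre construction: if `N` satisfies the self-adjoint PDE, then a
position vector `R` with `R_x = −(S (N×N_x) + B (N×N_y))`, `R_y = A (N×N_x) + S (N×N_y)`
exists; any such `R` satisfies `R_x × R_y = (AB − S²) det(N,N_x,N_y) N` and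
`⟨N,R_x⟩ = 0 = ⟨N,R_y⟩`, and is regular wherever `(AB − S²) det(N,N_x,N_y) ≠ 0`. -/
theorem converse_lelieuvre_surface
    (N : ℝ × ℝ → (Fin 3 → ℝ)) (A S B F : ℝ × ℝ → ℝ)
    (hN : ContDiff ℝ 2 N)
    (hA : ContDiff ℝ 1 A) (hS : ContDiff ℝ 1 S) (hB : ContDiff ℝ 1 B)
    (heq : ∀ p,
      pdx (fun q => A q • pdx N q) p + pdx (fun q => S q • pdy N q) p
        + pdy (fun q => B q • pdy N q) p + pdy (fun q => S q • pdx N q) p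
      = F p • N p) :
    (∃ R : ℝ × ℝ → (Fin 3 → ℝ), ∀ p,
        pdx R p = -(S p • (N p ⨯₃ pdx N p) + B p • (N p ⨯₃ pdy N p)) ∧
        pdy R p = A p • (N p ⨯₃ pdx N p) + S p • (N p ⨯₃ pdy N p)) ∧
    (∀ R : ℝ × ℝ → (Fin 3 → ℝ),
      (∀ p, pdx R p = -(S p • (N p ⨯₃ pdx N p) + B p • (N p ⨯₃ pdy N p)) ∧
            pdy R p = A p • (N p ⨯₃ pdx N p) + S p • (N p ⨯₃ pdy N p)) →
      ∀ p,
        pdx R p ⨯₃ pdy R p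
          = ((A p * B p - S p ^ 2) * det3 (N p) (pdx N p) (pdy N p)) • N p ∧
        N p ⬝ᵥ pdx R p = 0 ∧ N p ⬝ᵥ pdy R p = 0 ∧
        ((A p * B p - S p ^ 2) * det3 (N p) (pdx N p) (pdy N p) ≠ 0 →
          pdx R p ⨯₃ pdy R p ≠ 0)) := by
  have hdN : ContDiff ℝ 1 (fderiv ℝ N) := hN.fderiv_right le_rfl
  obtain ⟨R, hR⟩ := exists_pdx_pdy_eq_lelieuvre (hN.differentiable two_ne_zero)
    ((hdN.clm_apply contDiff_const).differentiable one_ne_zero)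
    ((hdN.clm_apply contDiff_const).differentiable one_ne_zero)
    (hA.differentiable one_ne_zero) (hS.differentiable one_ne_zero)
    (hB.differentiable one_ne_zero) heq
  refine ⟨⟨R, hR⟩, fun R hR p => ?_⟩
  obtain ⟨hRx, hRy⟩ := hR p
  rw [hRx, hRy, lelieuvre_cross_lelieuvre]
  refine ⟨rfl, by simp [dot_self_cross], by simp [dot_self_cross], fun hdet => ?_⟩
  refine smul_ne_zero hdet fun hN0 => hdet ?_
  simp [hN0, det3, Matrix.det_fin_three]
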